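/- Let S be a tournament and let (T_j)_{j∈V(S)} be a family of pairwise disjoint nonempty acyclic tournaments. Then the inversion index of the lexicographic sum ∑_{j∈S} T_j equals the inversion index of S: i(∑_{j∈S} T_j) = i(S). -/

import Mathlib

/-- A tournament on a vertex set `V`: a loopless directed graph such that for all
distinct `x, y` exactly one of `(x,y)`, `(y,x)` is an arc. -/
structure Tournament (V : Type*) where
  rel : V → V → Prop
  irrefl : ∀ x, ¬ rel x x
  total : ∀ x y, x ≠ y → rel x y ∨ rel y x
  asymm : ∀ x y, rel x y → ¬ rel y x

namespace Tournament

variable {V : Type*} {W : Type*}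

/-- The tournament obtained from `T` by reversing all arcs both of whose
endpoints lie in `X`. -/
def inv (T : Tournament V) (X : Set V) : Tournament V where
  rel x y := (x ∈ X ∧ y ∈ X ∧ T.rel y x) ∨ ((x ∉ X ∨ y ∉ X) ∧ T.rel x y)
  irrefl x := by have := T.irrefl x; tauto
  total x y hxy := by
    have := T.total x y hxy
    by_cases hx : x ∈ X <;> by_cases hy : y ∈ X <;> tauto
  asymm x y := by have h1 := T.asymm x y; have h2 := T.asymm y x; tauto

/-- Successive inversions along a finite sequence of subsets (`X_0` first). -/
def invSeq (T : Tournament V) (Xs : List (Set V)) : Tournament V :=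
  Xs.foldl Tournament.inv T

/-- A tournament is acyclic (transitive) when its arc relation is transitive,
i.e. a strict linear order. -/
def IsAcyclic (T : Tournament V) : Prop :=
  ∀ x y z, T.rel x y → T.rel y z → T.rel x z

/-- The inversion index: the least number of subsets to be inverted to reach an
acyclic tournament. -/
noncomputable def index (T : Tournament V) : ℕ :=
  sInf {m | ∃ Xs : List (Set V), Xs.length = m ∧ (T.invSeq Xs).IsAcyclic}

/-- Induced subtournament on a set of vertices. -/
def restrict (T : Tournament V) (A : Set V) : Tournament A where
  rel x y := T.rel x y
  irrefl x := T.irrefl x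
  total x y hxy := T.total x y (fun h => hxy (Subtype.ext h))
  asymm x y := T.asymm x y

/-- `T − x`: the subtournament induced on `V ∖ {x}`. -/
def erase (T : Tournament V) (x : V) : Tournament {y : V // y ≠ x} :=
  T.restrict {y | y ≠ x}

/-- `S` embeds into `T`: `S` is isomorphic to the subtournament of `T` induced on
some subset of the vertices of `T`. -/
def Embeds (S : Tournament V) (T : Tournament W) : Prop :=
  ∃ f : V → W, Function.Injective f ∧ ∀ x y, S.rel x y ↔ T.rel (f x) (f y)

/-- Isomorphism of tournaments. -/
def Iso (S : Tournament V) (T : Tournament W) : Prop :=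
  ∃ e : V ≃ W, ∀ x y, S.rel x y ↔ T.rel (e x) (e y)

/-- The dual tournament, obtained by reversing all arcs. -/
def dual (T : Tournament V) : Tournament V where
  rel x y := T.rel y x
  irrefl x := T.irrefl x
  total x y hxy := (T.total x y hxy).symm
  asymm x y h := T.asymm y x h

/-- `X` is an interval of `T`. -/
def IsInterval (T : Tournament V) (X : Set V) : Prop :=
  ∀ y ∉ X, (∀ x ∈ X, T.rel x y) ∨ (∀ x ∈ X, T.rel y x)

/-- A tournament is indecomposable when all its intervals are trivial. -/
def Indecomposable (T : Tournament V) : Prop :=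
  ∀ X : Set V, T.IsInterval X → X = ∅ ∨ X = Set.univ ∨ ∃ x, X = {x}

end Tournament

/-- The transitive tournament `n̲` on `{0, …, n−1}`, with arcs `(i,j)` for `i < j`. -/
def linear (n : ℕ) : Tournament (Fin n) where
  rel x y := x < y
  irrefl x := lt_irrefl x
  total x y h := by rcases lt_trichotomy x y with h' | h' | h' <;> tauto
  asymm _ _ h := lt_asymm h

/-- `2ℕ_{<k} = {0, 2, …, 2(k−1)}` as a subset of `Fin N`. -/
def evensLT {N : ℕ} (k : ℕ) : Set (Fin N) := {i | (i : ℕ) % 2 = 0 ∧ (i : ℕ) < 2 * k}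

/-- `2ℕ_{<k}+1 = {1, 3, …, 2k−1}` as a subset of `Fin N`. -/
def oddsLT {N : ℕ} (k : ℕ) : Set (Fin N) := {i | (i : ℕ) % 2 = 1 ∧ (i : ℕ) < 2 * k}

namespace Tournament

/-- The inversion index with values in `ℕ∞`: it is `⊤` (infinite) when no finite
sequence of inversions makes the tournament acyclic. -/
noncomputable def indexE {V : Type*} (T : Tournament V) : ℕ∞ :=
  sInf {n : ℕ∞ | ∃ Xs : List (Set V), (Xs.length : ℕ∞) = n ∧ (T.invSeq Xs).IsAcyclic}

end Tournament

/-!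
Inverting a union of blocks `⋃_{i ∈ Y} V(T_i)` of a lexicographic sum turns it into the
lexicographic sum over `Inv(S, Y)` of the blocks, those indexed by `Y` reversed; reversed
acyclic tournaments are acyclic, and a lexicographic sum of acyclic tournaments over an acyclic
tournament is acyclic. Hence `i(∑ T_j) ≤ i(S)`. Conversely, `S` embeds into the sum by picking
one vertex in each (nonempty) block, and inversions pull back along embeddings, so
`i(S) ≤ i(∑ T_j)`.
-/

namespace Tournament

section Index

variable {α β : Type*}

theorem indexE_le_of_map {A : Tournament α} {B : Tournament β} (g : Set β → Set α)
    (h : ∀ Xs, (B.invSeq Xs).IsAcyclic → (A.invSeq (Xs.map g)).IsAcyclic) :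
    A.indexE ≤ B.indexE := by
  refine sInf_le_sInf ?_
  rintro n ⟨Xs, rfl, hXs⟩
  exact ⟨Xs.map g, by rw [List.length_map], h Xs hXs⟩

theorem rel_inv_preimage_iff {A : Tournament α} {B : Tournament β} (f : α → β) (X : Set β)
    {x y : α} (hxy : A.rel x y ↔ B.rel (f x) (f y)) (hyx : A.rel y x ↔ B.rel (f y) (f x)) :
    (A.inv (f ⁻¹' X)).rel x y ↔ (B.inv X).rel (f x) (f y) := by
  simp only [inv, Set.mem_preimage, hxy, hyx]

theorem rel_invSeq_preimage_iff {A : Tournament α} {B : Tournament β} (f : α → β)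
    (h : ∀ x y, A.rel x y ↔ B.rel (f x) (f y)) (Xs : List (Set β)) (x y : α) :
    (A.invSeq (Xs.map (f ⁻¹' ·))).rel x y ↔ (B.invSeq Xs).rel (f x) (f y) := by
  induction Xs generalizing A B with
  | nil => exact h x y
  | cons X Xs ih => exact ih fun x y => rel_inv_preimage_iff f X (h x y) (h y x)

theorem IsAcyclic.of_rel_iff {A : Tournament α} {B : Tournament β} (f : α → β)
    (h : ∀ x y, A.rel x y ↔ B.rel (f x) (f y)) (hB : B.IsAcyclic) : A.IsAcyclic := by
  intro x y z hxy hyz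
  exact (h x z).2 (hB _ _ _ ((h x y).1 hxy) ((h y z).1 hyz))

theorem Embeds.indexE_le {A : Tournament α} {B : Tournament β} (hAB : A.Embeds B) :
    A.indexE ≤ B.indexE := by
  obtain ⟨f, -, hf⟩ := hAB
  exact indexE_le_of_map (f ⁻¹' ·) fun Xs hXs =>
    hXs.of_rel_iff f (rel_invSeq_preimage_iff f hf Xs)

theorem IsAcyclic.inv_setOf_const {A : Tournament α} (hA : A.IsAcyclic) (P : Prop) :
    (A.inv {_x | P}).IsAcyclic := by
  intro x y z
  by_cases hP : P <;> simp only [inv, Set.mem_ofPred_eq, hP, not_true, not_false_eq_true,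
    or_self, true_and, false_and, or_false, false_or]
  exacts [fun hxy hyz => hA z y x hyz hxy, hA x y z]

end Index

section LexSum

variable {I : Type*} {V : I → Type*}

def IsLexSum (S : Tournament I) (T : ∀ i, Tournament (V i)) (W : Tournament (Σ i, V i)) :
    Prop :=
  ∀ p q : Σ i, V i, W.rel p q ↔
    ((p.1 ≠ q.1 ∧ S.rel p.1 q.1) ∨ ∃ h : p.1 = q.1, (T q.1).rel (h ▸ p.2) q.2)

variable {S : Tournament I} {T : ∀ i, Tournament (V i)} {W : Tournament (Σ i, V i)}

theorem IsLexSum.rel_mk_mk_iff (hW : IsLexSum S T W) (i : I) (a b : V i) :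
    W.rel ⟨i, a⟩ ⟨i, b⟩ ↔ (T i).rel a b := by
  simp [hW ⟨i, a⟩ ⟨i, b⟩]

theorem IsLexSum.rel_iff_of_fst_ne (hW : IsLexSum S T W) {p q : Σ i, V i} (hpq : p.1 ≠ q.1) :
    W.rel p q ↔ S.rel p.1 q.1 := by
  simp [hW p q, hpq]

theorem IsLexSum.of_rel_iff
    (hne : ∀ p q : Σ i, V i, p.1 ≠ q.1 → (W.rel p q ↔ S.rel p.1 q.1))
    (heq : ∀ i (a b : V i), W.rel ⟨i, a⟩ ⟨i, b⟩ ↔ (T i).rel a b) : IsLexSum S T W := by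
  rintro ⟨i, a⟩ ⟨j, b⟩
  by_cases hij : i = j
  · subst hij
    simp [heq]
  · simp [hne ⟨i, a⟩ ⟨j, b⟩ hij, hij]

theorem IsLexSum.inv (hW : IsLexSum S T W) (Y : Set I) :
    IsLexSum (S.inv Y) (fun i => (T i).inv {_a | i ∈ Y}) (W.inv (Sigma.fst ⁻¹' Y)) :=
  .of_rel_iff
    (fun _ _ hpq => rel_inv_preimage_iff Sigma.fst Y (hW.rel_iff_of_fst_ne hpq)
      (hW.rel_iff_of_fst_ne (Ne.symm hpq)))
    (fun i a b => (rel_inv_preimage_iff (Sigma.mk i) (Sigma.fst ⁻¹' Y)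
      (hW.rel_mk_mk_iff i a b).symm (hW.rel_mk_mk_iff i b a).symm).symm)

theorem IsLexSum.invSeq (hW : IsLexSum S T W) (hT : ∀ i, (T i).IsAcyclic) (Xs : List (Set I)) :
    ∃ T' : ∀ i, Tournament (V i), (∀ i, (T' i).IsAcyclic) ∧
      IsLexSum (S.invSeq Xs) T' (W.invSeq (Xs.map (Sigma.fst ⁻¹' ·))) := by
  induction Xs generalizing S T W with
  | nil => exact ⟨T, hT, hW⟩
  | cons Y Xs ih =>
    exact ih (IsLexSum.inv hW Y) fun i => IsAcyclic.inv_setOf_const (hT i) (i ∈ Y)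

theorem IsLexSum.isAcyclic (hW : IsLexSum S T W) (hS : S.IsAcyclic)
    (hT : ∀ i, (T i).IsAcyclic) : W.IsAcyclic := by
  rintro ⟨i, a⟩ ⟨j, b⟩ ⟨k, c⟩ hab hbc
  rw [hW] at hab hbc ⊢
  dsimp only at hab hbc ⊢
  rcases hab with ⟨hij, hab⟩ | ⟨hij, hab⟩ <;> rcases hbc with ⟨hjk, hbc⟩ | ⟨hjk, hbc⟩
  · by_cases hik : i = k
    · subst hik
      exact absurd hbc (S.asymm i j hab)
    · exact Or.inl ⟨hik, hS i j k hab hbc⟩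
  · subst hjk
    exact Or.inl ⟨hij, hab⟩
  · subst hij
    exact Or.inl ⟨hjk, hbc⟩
  · subst hij hjk
    exact Or.inr ⟨rfl, hT i a b c hab hbc⟩

theorem IsLexSum.indexE_le (hW : IsLexSum S T W) (hT : ∀ i, (T i).IsAcyclic) :
    W.indexE ≤ S.indexE :=
  indexE_le_of_map (Sigma.fst ⁻¹' ·) fun Xs hXs =>
    let ⟨_, hT', hW'⟩ := hW.invSeq hT Xs
    hW'.isAcyclic hXs hT'

theorem IsLexSum.embeds (hW : IsLexSum S T W) (x : ∀ i, V i) : S.Embeds W := by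
  refine ⟨fun i => ⟨i, x i⟩, fun i j h => congrArg Sigma.fst h, fun i j => ?_⟩
  by_cases hij : i = j
  · subst hij
    exact iff_of_false (S.irrefl i) (W.irrefl _)
  · exact (hW.rel_iff_of_fst_ne (p := ⟨i, x i⟩) (q := ⟨j, x j⟩) hij).symm

end LexSum

end Tournament

/-- the inversion index of a lexicographic sum of nonempty acyclic
tournaments `(T_i)` indexed by a tournament `S` equals the inversion index of `S`.
(The lexicographic sum is axiomatized by `hW` on the sigma type of the family.) -/
theorem index_lexSum {I : Type*} {V : I → Type*} (S : Tournament I)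
    (T : ∀ i, Tournament (V i))
    (hne : ∀ i, Nonempty (V i)) (hac : ∀ i, (T i).IsAcyclic)
    (W : Tournament (Σ i, V i))
    (hW : ∀ p q : Σ i, V i, W.rel p q ↔
      ((p.1 ≠ q.1 ∧ S.rel p.1 q.1) ∨ ∃ h : p.1 = q.1, (T q.1).rel (h ▸ p.2) q.2)) :
    W.indexE = S.indexE := by
  have hlex : Tournament.IsLexSum S T W := hW
  exact le_antisymm (hlex.indexE_le hac) (hlex.embeds fun i => (hne i).some).indexE_le
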